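/- Let P be a full-dimensional rational convex polytope in ℝ^d containing 0 in its interior. Then the polar dual P* is a lattice polytope if and only if for every natural number n, the number of lattice points in nP equals the number of lattice points in the interior of (n+1)P. -/

import Mathlib

/-!
The gauge `g` of `P` (its Minkowski functional) is the support function of `P*`. Since
`x ∈ nP ↔ g x ≤ n` and `x ∈ int((n+1)P) ↔ g x < n + 1`, the lattice-point counts agree for every
`n` iff `g` is integer-valued on `ℤ^d`. If `P* = conv W` with `W ⊆ ℤ^d`, then
`g x = max_{w ∈ W} ⟪x, w⟫` is an integer for lattice `x`. Conversely, `P*` is cut out by finitely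
many inequalities, hence is the convex hull of its finitely many vertices. The open normal cone of
a vertex `a` is invariant under positive scaling, so it contains lattice points `w` and `w + eᵢ`;
on it `g x = ⟪x, a⟫`, whence `aᵢ = g (w + eᵢ) - g w ∈ ℤ`.
-/

open scoped RealInnerProductSpace BigOperators Pointwise

noncomputable section

/-- A point of `ℝ^d` with integer coordinates. -/
def IsLatticePoint {d : ℕ} (x : EuclideanSpace ℝ (Fin d)) : Prop :=
  ∀ i, ∃ z : ℤ, x i = (z : ℝ)

/-- A point of `ℝ^d` with rational coordinates. -/
def IsRationalPoint {d : ℕ} (x : EuclideanSpace ℝ (Fin d)) : Prop :=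
  ∀ i, ∃ q : ℚ, x i = (q : ℝ)

/-- The polar dual `S* = {y : ⟨x, y⟩ ≤ 1 for all x ∈ S}`. -/
def polarDual {d : ℕ} (S : Set (EuclideanSpace ℝ (Fin d))) :
    Set (EuclideanSpace ℝ (Fin d)) :=
  {y | ∀ x ∈ S, ⟪x, y⟫ ≤ 1}

open Set Filter Topology

section LatticePoints

variable {d : ℕ}

lemma IsLatticePoint.add {x y : EuclideanSpace ℝ (Fin d)} (hx : IsLatticePoint x)
    (hy : IsLatticePoint y) : IsLatticePoint (x + y) := fun i => by
  obtain ⟨a, ha⟩ := hx i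
  obtain ⟨b, hb⟩ := hy i
  exact ⟨a + b, by simp [ha, hb]⟩

lemma IsLatticePoint.natCast_smul {x : EuclideanSpace ℝ (Fin d)} (hx : IsLatticePoint x)
    (n : ℕ) : IsLatticePoint ((n : ℝ) • x) := fun i => by
  obtain ⟨a, ha⟩ := hx i
  exact ⟨n * a, by simp [ha]⟩

lemma isLatticePoint_single (i : Fin d) : IsLatticePoint (EuclideanSpace.single i (1 : ℝ)) :=
  fun j => ⟨if j = i then 1 else 0, by by_cases h : j = i <;> simp [h]⟩

lemma IsLatticePoint.exists_int_inner_eq {x y : EuclideanSpace ℝ (Fin d)}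
    (hx : IsLatticePoint x) (hy : IsLatticePoint y) : ∃ z : ℤ, ⟪x, y⟫ = z := by
  choose a ha using hx
  choose b hb using hy
  exact ⟨∑ i, a i * b i, by simp [PiLp.inner_apply, ha, hb, mul_comm]⟩

lemma isLatticePoint_iff_mem_span {x : EuclideanSpace ℝ (Fin d)} :
    IsLatticePoint x ↔
      x ∈ Submodule.span ℤ (range (EuclideanSpace.basisFun (Fin d) ℝ).toBasis) := by
  rw [Module.Basis.mem_span_iff_repr_mem]
  simp [IsLatticePoint, eq_comm]

lemma Bornology.IsBounded.finite_setOf_isLatticePoint {s : Set (EuclideanSpace ℝ (Fin d))}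
    (hs : Bornology.IsBounded s) : {x ∈ s | IsLatticePoint x}.Finite :=
  (ZSpan.setFinite_inter (EuclideanSpace.basisFun (Fin d) ℝ).toBasis hs).subset
    fun _ hx => ⟨hx.1, isLatticePoint_iff_mem_span.mp hx.2⟩

lemma dense_setOf_isRationalPoint : Dense {x : EuclideanSpace ℝ (Fin d) | IsRationalPoint x} := by
  have := (dense_pi univ fun _ _ => Rat.denseRange_cast (𝕜 := ℝ)).preimage
    (PiLp.homeomorph 2 fun _ : Fin d => ℝ).isOpenMap
  convert this using 1
  ext x
  simp [IsRationalPoint, eq_comm, PiLp.homeomorph]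

lemma IsRationalPoint.exists_natCast_smul_isLatticePoint {x : EuclideanSpace ℝ (Fin d)}
    (hx : IsRationalPoint x) : ∃ N : ℕ, 0 < N ∧ IsLatticePoint ((N : ℝ) • x) := by
  choose q hq using hx
  refine ⟨∏ i, (q i).den, Finset.prod_pos fun i _ => (q i).pos, fun i => ?_⟩
  obtain ⟨c, hc⟩ := Finset.dvd_prod_of_mem (fun j => (q j).den) (Finset.mem_univ i)
  refine ⟨c * (q i).num, ?_⟩
  rw [PiLp.smul_apply, hq i, hc, smul_eq_mul]
  push_cast
  rw [mul_comm ((q i).den : ℝ), mul_assoc]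
  exact_mod_cast congrArg (fun r : ℚ => (c : ℝ) * r) (Rat.den_mul_eq_num (q i))

lemma IsOpen.exists_isLatticePoint_of_smul_mem {C : Set (EuclideanSpace ℝ (Fin d))}
    (hC : IsOpen C) (hne : C.Nonempty) (hsmul : ∀ x ∈ C, ∀ t : ℝ, 0 < t → t • x ∈ C) :
    ∃ w ∈ C, IsLatticePoint w := by
  obtain ⟨q, hqC, hq⟩ := dense_setOf_isRationalPoint.inter_open_nonempty C hC hne
  obtain ⟨N, hN, hNq⟩ := hq.exists_natCast_smul_isLatticePoint
  exact ⟨_, hsmul q hqC N (by exact_mod_cast hN), hNq⟩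

end LatticePoints

section Gauge

variable {E : Type*} [NormedAddCommGroup E] [NormedSpace ℝ E] {s : Set E} {x : E}

lemma mem_smul_iff_gauge_le (hc : Convex ℝ s) (hcl : IsClosed s) (hs₀ : s ∈ 𝓝 0) {r : ℝ}
    (hr : 0 < r) : x ∈ r • s ↔ gauge s x ≤ r := by
  rw [mem_smul_set_iff_inv_smul_mem₀ hr.ne']
  conv_lhs => rw [← hcl.closure_eq]
  rw [← gauge_le_one_iff_mem_closure hc hs₀, gauge_smul_of_nonneg (inv_nonneg.mpr hr.le),
    smul_eq_mul, inv_mul_le_iff₀ hr, mul_one]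

lemma mem_interior_smul_iff_gauge_lt (hc : Convex ℝ s) (hs₀ : s ∈ 𝓝 0) {r : ℝ} (hr : 0 < r) :
    x ∈ interior (r • s) ↔ gauge s x < r := by
  rw [interior_smul₀ hr.ne', mem_smul_set_iff_inv_smul_mem₀ hr.ne',
    ← gauge_lt_one_iff_mem_interior hc hs₀, gauge_smul_of_nonneg (inv_nonneg.mpr hr.le),
    smul_eq_mul, inv_mul_lt_iff₀ hr, mul_one]

lemma mem_natCast_smul_iff_gauge_le (hc : Convex ℝ s) (hcl : IsClosed s)
    (hb : Bornology.IsBounded s) (hs₀ : s ∈ 𝓝 0) (n : ℕ) :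
    x ∈ (n : ℝ) • s ↔ gauge s x ≤ n := by
  rcases n.eq_zero_or_pos with rfl | hn
  · have habs : Absorbent ℝ s := absorbent_nhds_zero hs₀
    rw [Nat.cast_zero, zero_smul_set ⟨0, mem_of_mem_nhds hs₀⟩, Set.mem_zero,
      (gauge_nonneg x).ge_iff_eq', gauge_eq_zero habs
        (NormedSpace.isVonNBounded_iff ℝ |>.mpr hb)]
  · exact mem_smul_iff_gauge_le hc hcl hs₀ (by exact_mod_cast hn)

end Gauge

lemma exists_int_eq_iff_forall_lt_add_one_imp_le {t : ℝ} (ht : 0 ≤ t) :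
    (∃ z : ℤ, t = z) ↔ ∀ n : ℕ, t < n + 1 → t ≤ n := by
  constructor
  · rintro ⟨z, rfl⟩ n h
    exact_mod_cast Int.lt_add_one_iff.mp (by exact_mod_cast h)
  · intro h
    refine ⟨⌊t⌋₊, ?_⟩
    rw [Int.cast_natCast]
    exact le_antisymm (h _ (Nat.lt_floor_add_one t)) (Nat.floor_le ht)

lemma ncard_eq_ncard_iff_subset {α : Type*} {A B : Set α} (hAB : A ⊆ B) (hB : B.Finite) :
    A.ncard = B.ncard ↔ B ⊆ A :=
  ⟨fun h => (eq_of_subset_of_ncard_le hAB h.ge hB).ge, fun h => by rw [hAB.antisymm h]⟩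

section Counting

variable {d : ℕ} {P : Set (EuclideanSpace ℝ (Fin d))}

theorem forall_ncard_eq_iff_forall_gauge_int (hc : Convex ℝ P) (hcl : IsClosed P)
    (hb : Bornology.IsBounded P) (hP₀ : P ∈ 𝓝 0) :
    (∀ n : ℕ, Set.ncard {x ∈ (n : ℝ) • P | IsLatticePoint x} =
        Set.ncard {x ∈ interior (((n : ℝ) + 1) • P) | IsLatticePoint x}) ↔
      ∀ x, IsLatticePoint x → ∃ z : ℤ, gauge P x = z := by
  have hS (n : ℕ) : {x ∈ (n : ℝ) • P | IsLatticePoint x} =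
      {x | IsLatticePoint x ∧ gauge P x ≤ n} := by
    ext x
    rw [mem_sep_iff, mem_natCast_smul_iff_gauge_le hc hcl hb hP₀, and_comm, mem_ofPred_eq]
  have hT (n : ℕ) : {x ∈ interior (((n : ℝ) + 1) • P) | IsLatticePoint x} =
      {x | IsLatticePoint x ∧ gauge P x < n + 1} := by
    ext x
    rw [mem_sep_iff, mem_interior_smul_iff_gauge_lt hc hP₀ (by positivity), and_comm,
      mem_ofPred_eq]
  have hsub (n : ℕ) : {x | IsLatticePoint x ∧ gauge P x ≤ n} ⊆
      {x | IsLatticePoint x ∧ gauge P x < n + 1} :=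
    fun x hx => ⟨hx.1, hx.2.trans_lt (lt_add_one _)⟩
  have hfin (n : ℕ) : {x | IsLatticePoint x ∧ gauge P x < n + 1}.Finite := by
    rw [← hT]
    exact (hb.smul₀ _).finite_setOf_isLatticePoint.subset
      fun x hx => ⟨interior_subset hx.1, hx.2⟩
  simp_rw [hS, hT, ncard_eq_ncard_iff_subset (hsub _) (hfin _),
    exists_int_eq_iff_forall_lt_add_one_imp_le (gauge_nonneg _)]
  exact ⟨fun h x hx n hn => (h n ⟨hx, hn⟩).2, fun h n x hx => ⟨hx.1, h x hx.1 n hx.2⟩⟩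

end Counting

section Polyhedron

variable {F : Type*} [NormedAddCommGroup F] [InnerProductSpace ℝ F]

lemma eq_of_mem_extremePoints_of_forall_inner_eq_one {V : Finset F} {a b : F}
    (ha : a ∈ {y | ∀ v ∈ V, ⟪v, y⟫ ≤ 1}.extremePoints ℝ) (hb : ∀ v ∈ V, ⟪v, b⟫ ≤ 1)
    (hab : ∀ v ∈ V, ⟪v, a⟫ = 1 → ⟪v, b⟫ = 1) : a = b := by
  obtain ⟨haQ, hext⟩ := ha
  -- for small `t > 0`, `a` lies strictly between `b` and `a + t • (a - b)`, both in the set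
  have hev : ∀ᶠ t in 𝓝 (0 : ℝ), ∀ v ∈ V, ⟪v, a + t • (a - b)⟫ ≤ 1 := by
    refine (Filter.eventually_all_finset V).2 fun v hv => ?_
    simp only [inner_add_right, real_inner_smul_right]
    rcases (haQ v hv).lt_or_eq with hlt | heq
    · have : Tendsto (fun t : ℝ => ⟪v, a⟫ + t * ⟪v, a - b⟫) (𝓝 0) (𝓝 ⟪v, a⟫) := by
        simpa using (tendsto_const_nhds (x := ⟪v, a⟫)).add
          ((tendsto_id (x := 𝓝 (0 : ℝ))).mul_const ⟪v, a - b⟫)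
      exact this.eventually (ge_mem_nhds hlt)
    · refine Eventually.of_forall fun t => ?_
      rw [inner_sub_right, heq, hab v hv heq]
      simp
  obtain ⟨t, hta, ht⟩ := ((hev.filter_mono nhdsWithin_le_nhds).and
    (self_mem_nhdsWithin (s := Ioi 0))).exists
  have hseg : a ∈ openSegment ℝ b (a + t • (a - b)) := by
    refine ⟨t / (1 + t), 1 / (1 + t), by positivity, by positivity, ?_, ?_⟩
    · rw [← add_div, div_eq_one_iff_eq (by positivity), add_comm]
    · match_scalars <;> field_simp; ring
  exact (hext hb hta hseg).symm

lemma inner_le_of_mem_convexHull {s : Set F} {x y : F} {c : ℝ} (h : ∀ b ∈ s, ⟪x, b⟫ ≤ c)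
    (hy : y ∈ convexHull ℝ s) : ⟪x, y⟫ ≤ c :=
  convexHull_min h (convex_halfSpace_le (innerₛₗ ℝ x).isLinear c) hy

lemma finite_extremePoints_setOf_inner_le (V : Finset F) :
    ({y | ∀ v ∈ V, ⟪v, y⟫ ≤ 1}.extremePoints ℝ).Finite := by
  classical
  refine Set.Finite.of_finite_image (f := fun a => V.filter fun v => ⟪v, a⟫ = 1)
    (V.powerset.finite_toSet.subset ?_) fun a ha b hb hab => ?_
  · rintro _ ⟨a, -, rfl⟩
    exact Finset.mem_coe.mpr (Finset.mem_powerset.mpr (Finset.filter_subset _ V))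
  · have hiff (v : F) (hv : v ∈ V) : ⟪v, a⟫ = 1 ↔ ⟪v, b⟫ = 1 := by
      simpa [hv] using Finset.ext_iff.mp hab v
    exact eq_of_mem_extremePoints_of_forall_inner_eq_one ha hb.1 fun v hv => (hiff v hv).1

variable [CompleteSpace F]

lemma exists_forall_inner_lt_of_mem_extremePoints {E : Set F} (hE : E.Finite) {a : F}
    (ha : a ∈ (convexHull ℝ E).extremePoints ℝ) : ∃ x : F, ∀ b ∈ E \ {a}, ⟪x, b⟫ < ⟪x, a⟫ := by
  have hconv : Convex ℝ (convexHull ℝ E \ {a}) :=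
    ((convex_convexHull ℝ E).mem_extremePoints_iff_convex_sdiff.mp ha).2
  have hnot : a ∉ convexHull ℝ (E \ {a}) := fun h =>
    (convexHull_min (sdiff_subset_sdiff_left (subset_convexHull ℝ E)) hconv h).2 rfl
  obtain ⟨f, u, hf, hfa⟩ :=
    geometric_hahn_banach_closed_point (convex_convexHull ℝ _)
      (hE.sdiff.isClosed_convexHull (𝕜 := ℝ)) hnot
  refine ⟨(InnerProductSpace.toDual ℝ F).symm f, fun b hb => ?_⟩
  simp only [InnerProductSpace.toDual_symm_apply]
  exact (hf b (subset_convexHull ℝ _ hb)).trans hfa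

end Polyhedron

section Polar

variable {d : ℕ} {P : Set (EuclideanSpace ℝ (Fin d))}

lemma zero_mem_polarDual : (0 : EuclideanSpace ℝ (Fin d)) ∈ polarDual P :=
  fun x _ => by simp

lemma convex_polarDual : Convex ℝ (polarDual P) := by
  simp only [polarDual, ofPred_forall]
  exact convex_iInter₂ fun x _ => convex_halfSpace_le (innerₛₗ ℝ x).isLinear 1

lemma isClosed_polarDual : IsClosed (polarDual P) := by
  simp only [polarDual, ofPred_forall]
  exact isClosed_biInter fun x _ => isClosed_le (by fun_prop) continuous_const

lemma isBounded_polarDual (hP₀ : P ∈ 𝓝 0) : Bornology.IsBounded (polarDual P) := by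
  obtain ⟨ε, hε, hball⟩ := Metric.nhds_basis_closedBall.mem_iff.mp hP₀
  refine (Metric.isBounded_closedBall (x := 0) (r := ε⁻¹)).subset fun y hy => ?_
  rcases eq_or_ne y 0 with rfl | hy0
  · simpa using hε.le
  have hnorm : 0 < ‖y‖ := norm_pos_iff.mpr hy0
  have hxP : (ε / ‖y‖) • y ∈ P := hball <| by
    rw [mem_closedBall_zero_iff, norm_smul, Real.norm_of_nonneg (by positivity),
      div_mul_cancel₀ _ hnorm.ne']
  have := hy _ hxP
  rw [real_inner_smul_left, real_inner_self_eq_norm_sq] at this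
  rw [mem_closedBall_zero_iff, le_inv_comm₀ hnorm hε, inv_eq_one_div, le_div_iff₀ hnorm]
  calc ε * ‖y‖ = ε / ‖y‖ * ‖y‖ ^ 2 := by field_simp
    _ ≤ 1 := this

lemma polarDual_convexHull (s : Set (EuclideanSpace ℝ (Fin d))) :
    polarDual (convexHull ℝ s) = {y | ∀ v ∈ s, ⟪v, y⟫ ≤ 1} := by
  ext y
  refine ⟨fun hy v hv => hy v (subset_convexHull ℝ s hv), fun hy x hx => ?_⟩
  rw [real_inner_comm]
  exact inner_le_of_mem_convexHull (fun v hv => real_inner_comm y v ▸ hy v hv) hx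

lemma mem_of_forall_polarDual_inner_le (hc : Convex ℝ P) (hcl : IsClosed P)
    (hP₀ : (0 : EuclideanSpace ℝ (Fin d)) ∈ P) {x : EuclideanSpace ℝ (Fin d)}
    (hx : ∀ y ∈ polarDual P, ⟪x, y⟫ ≤ 1) : x ∈ P := by
  by_contra hxP
  obtain ⟨f, u, hfP, hfx⟩ := geometric_hahn_banach_closed_point hc hcl hxP
  have hu : 0 < u := by simpa using hfP 0 hP₀
  set y := (InnerProductSpace.toDual ℝ _).symm f
  have hy (z : EuclideanSpace ℝ (Fin d)) : ⟪z, u⁻¹ • y⟫ = u⁻¹ * f z := by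
    rw [real_inner_smul_right, real_inner_comm, InnerProductSpace.toDual_symm_apply]
  have hyP : u⁻¹ • y ∈ polarDual P := fun z hz => by
    rw [hy, inv_mul_le_one₀ hu]
    exact (hfP z hz).le
  have := hx _ hyP
  rw [hy, inv_mul_le_one₀ hu] at this
  linarith

lemma gauge_eq_inner_of_forall_inner_le (hc : Convex ℝ P) (hcl : IsClosed P) (hP₀ : P ∈ 𝓝 0)
    {a x : EuclideanSpace ℝ (Fin d)} (ha : a ∈ polarDual P)
    (hmax : ∀ y ∈ polarDual P, ⟪x, y⟫ ≤ ⟪x, a⟫) :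
    gauge P x = ⟪x, a⟫ := by
  have key (r : ℝ) (hr : 0 < r) : gauge P x ≤ r ↔ ⟪x, a⟫ ≤ r := by
    rw [← mem_smul_iff_gauge_le hc hcl hP₀ hr, mem_smul_set_iff_inv_smul_mem₀ hr.ne']
    constructor
    · intro hx
      simpa [real_inner_smul_left, inv_mul_le_one₀ hr] using ha _ hx
    · intro h
      refine mem_of_forall_polarDual_inner_le hc hcl (mem_of_mem_nhds hP₀) fun y hy => ?_
      rw [real_inner_smul_left, inv_mul_le_one₀ hr]
      exact (hmax y hy).trans h
  have ha₀ : 0 ≤ ⟪x, a⟫ := by simpa using hmax 0 zero_mem_polarDual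
  apply le_antisymm
  · exact le_of_forall_gt_imp_ge_of_dense fun r hr => (key r (ha₀.trans_lt hr)).mpr hr.le
  · exact le_of_forall_gt_imp_ge_of_dense fun r hr =>
      (key r ((gauge_nonneg x).trans_lt hr)).mp hr.le

lemma exists_int_gauge_eq_of_polarDual_eq_convexHull (hc : Convex ℝ P) (hcl : IsClosed P)
    (hP₀ : P ∈ 𝓝 0) {W : Finset (EuclideanSpace ℝ (Fin d))} (hW : ∀ w ∈ W, IsLatticePoint w)
    (hQ : polarDual P = convexHull ℝ (W : Set _)) {x : EuclideanSpace ℝ (Fin d)}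
    (hx : IsLatticePoint x) : ∃ z : ℤ, gauge P x = z := by
  have hne : W.Nonempty := by
    have h0 : (0 : EuclideanSpace ℝ (Fin d)) ∈ convexHull ℝ (W : Set _) :=
      hQ ▸ zero_mem_polarDual
    exact Finset.coe_nonempty.mp (convexHull_nonempty_iff.mp ⟨0, h0⟩)
  obtain ⟨a, haW, hmax⟩ := W.exists_max_image (fun w => ⟪x, w⟫) hne
  have haQ : a ∈ polarDual P := hQ ▸ subset_convexHull ℝ _ haW
  rw [gauge_eq_inner_of_forall_inner_le hc hcl hP₀ haQ fun y hy =>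
    inner_le_of_mem_convexHull hmax (hQ ▸ hy)]
  exact hx.exists_int_inner_eq (hW a haW)

lemma polarDual_eq_convexHull_extremePoints {V : Finset (EuclideanSpace ℝ (Fin d))}
    (hP : P = convexHull ℝ (V : Set _)) (hP₀ : P ∈ 𝓝 0) :
    ((polarDual P).extremePoints ℝ).Finite ∧
      polarDual P = convexHull ℝ ((polarDual P).extremePoints ℝ) := by
  have hfin : ((polarDual P).extremePoints ℝ).Finite := by
    rw [hP, polarDual_convexHull]
    exact finite_extremePoints_setOf_inner_le V
  have hcomp : IsCompact (polarDual P) :=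
    Metric.isCompact_of_isClosed_isBounded isClosed_polarDual (isBounded_polarDual hP₀)
  exact ⟨hfin, (closure_convexHull_extremePoints hcomp convex_polarDual).symm.trans
    (hfin.isClosed_convexHull (𝕜 := ℝ)).closure_eq⟩

lemma isLatticePoint_of_mem_extremePoints {E : Set (EuclideanSpace ℝ (Fin d))}
    (hE : E.Finite) {a : EuclideanSpace ℝ (Fin d)} (ha : a ∈ (convexHull ℝ E).extremePoints ℝ)
    (h : ∀ x, IsLatticePoint x → (∀ b ∈ E, ⟪x, b⟫ ≤ ⟪x, a⟫) → ∃ z : ℤ, ⟪x, a⟫ = z) :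
    IsLatticePoint a := by
  set C := {x : EuclideanSpace ℝ (Fin d) | ∀ b ∈ E \ {a}, ⟪x, b⟫ < ⟪x, a⟫}
  have hCopen : IsOpen C := by
    simp only [C, ofPred_forall]
    exact hE.sdiff.isOpen_biInter fun b _ => isOpen_lt (by fun_prop) (by fun_prop)
  have hCsmul : ∀ x ∈ C, ∀ t : ℝ, 0 < t → t • x ∈ C := fun x hx t ht b hb => by
    simpa only [real_inner_smul_left, mul_lt_mul_iff_right₀ ht] using hx b hb
  have hCmax : ∀ x ∈ C, ∀ b ∈ E, ⟪x, b⟫ ≤ ⟪x, a⟫ := fun x hx b hb => by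
    rcases eq_or_ne b a with rfl | hba
    exacts [le_rfl, (hx b ⟨hb, hba⟩).le]
  obtain ⟨w, hwC, hw⟩ := hCopen.exists_isLatticePoint_of_smul_mem
    (exists_forall_inner_lt_of_mem_extremePoints hE ha) hCsmul
  intro i
  set e := EuclideanSpace.single i (1 : ℝ)
  have hev : ∀ᶠ m : ℕ in atTop, w + (m : ℝ)⁻¹ • e ∈ C := by
    have : Tendsto (fun m : ℕ => w + (m : ℝ)⁻¹ • e) atTop (𝓝 w) := by
      simpa using tendsto_const_nhds.add ((tendsto_inv_atTop_nhds_zero_nat (𝕜 := ℝ)).smul_const e)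
    exact this.eventually (hCopen.mem_nhds hwC)
  obtain ⟨m, hm, hm₀⟩ := (hev.and (eventually_gt_atTop 0)).exists
  have hm₀' : (0 : ℝ) < m := by exact_mod_cast hm₀
  have hmwe : (m : ℝ) • w + e ∈ C := by
    simpa [smul_add, smul_smul, hm₀'.ne'] using hCsmul _ hm m hm₀'
  obtain ⟨z₁, hz₁⟩ := h _ ((hw.natCast_smul m).add (isLatticePoint_single i)) (hCmax _ hmwe)
  obtain ⟨z₂, hz₂⟩ := h _ (hw.natCast_smul m) (hCmax _ (hCsmul w hwC m hm₀'))
  refine ⟨z₁ - z₂, ?_⟩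
  have hai : a i = ⟪(m : ℝ) • w + e, a⟫ - ⟪(m : ℝ) • w, a⟫ := by
    simp [e, inner_add_left, EuclideanSpace.inner_single_left]
  rw [hai, hz₁, hz₂]
  push_cast
  ring

end Polar

theorem stmt10_general {d : ℕ} (V : Finset (EuclideanSpace ℝ (Fin d)))
    (P : Set (EuclideanSpace ℝ (Fin d))) (hP : P = convexHull ℝ (V : Set _))
    (h0 : 0 ∈ interior P) :
    (∃ W : Finset (EuclideanSpace ℝ (Fin d)), (∀ w ∈ W, IsLatticePoint w) ∧
        polarDual P = convexHull ℝ (W : Set _)) ↔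
    (∀ n : ℕ,
      Set.ncard {x ∈ (n : ℝ) • P | IsLatticePoint x} =
      Set.ncard {x ∈ interior (((n : ℝ) + 1) • P) | IsLatticePoint x}) := by
  have hc : Convex ℝ P := hP ▸ convex_convexHull ℝ _
  have hcomp : IsCompact P := hP ▸ V.finite_toSet.isCompact_convexHull ℝ
  have hP₀ : P ∈ 𝓝 0 := mem_interior_iff_mem_nhds.mp h0
  rw [forall_ncard_eq_iff_forall_gauge_int hc hcomp.isClosed hcomp.isBounded hP₀]
  constructor
  · rintro ⟨W, hW, hQ⟩ x hx
    exact exists_int_gauge_eq_of_polarDual_eq_convexHull hc hcomp.isClosed hP₀ hW hQ hx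
  · intro hint
    obtain ⟨hfin, hQ⟩ := polarDual_eq_convexHull_extremePoints hP hP₀
    refine ⟨hfin.toFinset, fun a ha => ?_, by rwa [hfin.coe_toFinset]⟩
    rw [hfin.mem_toFinset] at ha
    refine isLatticePoint_of_mem_extremePoints hfin (by rwa [← hQ]) fun x hx hmax => ?_
    have hmax' (y) (hy : y ∈ polarDual P) : ⟪x, y⟫ ≤ ⟪x, a⟫ :=
      inner_le_of_mem_convexHull hmax (hQ ▸ hy)
    rw [← gauge_eq_inner_of_forall_inner_le hc hcomp.isClosed hP₀ (extremePoints_subset ha) hmax']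
    exact hint x hx

/-- Hibi's theorem: for a full-dimensional rational convex polytope `P ⊆ ℝ^d` with
`0 ∈ int P`, the polar dual `P*` is a lattice polytope if and only if
`#(nP ∩ ℤ^d) = #(int((n+1)P) ∩ ℤ^d)` for every `n ∈ ℕ`. -/
theorem stmt10 {d : ℕ} (V : Finset (EuclideanSpace ℝ (Fin d)))
    (hV : ∀ v ∈ V, IsRationalPoint v)
    (P : Set (EuclideanSpace ℝ (Fin d))) (hP : P = convexHull ℝ (V : Set _))
    (h0 : 0 ∈ interior P) :
    (∃ W : Finset (EuclideanSpace ℝ (Fin d)), (∀ w ∈ W, IsLatticePoint w) ∧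
        polarDual P = convexHull ℝ (W : Set _)) ↔
    (∀ n : ℕ,
      Set.ncard {x ∈ (n : ℝ) • P | IsLatticePoint x} =
      Set.ncard {x ∈ interior (((n : ℝ) + 1) • P) | IsLatticePoint x}) :=
  stmt10_general V P hP h0
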